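/- Given ε > 0, μ ∈ M and m ∈ [Eμ−ε, Eμ+ε], there exists a unique measure S(μ; m, ε) ∈ B^SL(μ,ε) ∩ M_m such that S(μ; m, ε) ≤_c ν for all ν ∈ B^SL(μ,ε) ∩ M_m, and its call function is R^min_μ(x; m, ε) = max{ (m − x)⁺, R_μ(x) − ε } for all x ∈ ℝ. -/

import Mathlib

open MeasureTheory Filter Set
open scoped ENNReal

/-- Call function `R_μ(x) = ∫ (y−x)⁺ μ(dy)`. -/
noncomputable def callFn (μ : Measure ℝ) (x : ℝ) : ℝ := ∫ y, max (y - x) 0 ∂μ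

/-- Mean `Eμ = ∫ y μ(dy)`. -/
noncomputable def meanM (μ : Measure ℝ) : ℝ := ∫ y, y ∂μ

/-- Distribution function `F_μ(x) = μ((−∞,x])`. -/
noncomputable def cdfM (μ : Measure ℝ) (x : ℝ) : ℝ := (μ (Set.Iic x)).toReal

/-- Membership in `M`: Borel probability measure on ℝ with finite first moment. -/
def MemM (μ : Measure ℝ) : Prop :=
  IsProbabilityMeasure μ ∧ Integrable (fun y => y) μ

/-- Convex order `μ ≤_c ν`. -/
def ConvexOrder (μ ν : Measure ℝ) : Prop :=
  ∀ φ : ℝ → ℝ, ConvexOn ℝ Set.univ φ → Integrable φ μ → Integrable φ ν →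
    ∫ y, φ y ∂μ ≤ ∫ y, φ y ∂ν

/-- Infinity Wasserstein distance via distribution functions, valued in `[0,∞]`,
with `inf ∅ = ∞`. -/
noncomputable def Winf (μ ν : Measure ℝ) : ℝ≥0∞ :=
  sInf (ENNReal.ofReal '' {ε : ℝ | 0 < ε ∧ ∀ x : ℝ,
    cdfM μ (x - ε) ≤ cdfM ν x ∧ cdfM ν x ≤ cdfM μ (x + ε)})

/-- Membership in the closed ball `B^∞(μ,ε)` (within `M`). -/
def InBallWinf (μ : Measure ℝ) (ε : ℝ) (ν : Measure ℝ) : Prop :=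
  MemM ν ∧ Winf μ ν ≤ ENNReal.ofReal ε

/-- `conv2 f g`: the largest convex function majorized by `min f g`, pointwise. -/
noncomputable def conv2 (f g : ℝ → ℝ) (x : ℝ) : ℝ :=
  sSup {z : ℝ | ∃ h : ℝ → ℝ, ConvexOn ℝ Set.univ h ∧ (∀ y, h y ≤ min (f y) (g y)) ∧ z = h x}

/-- `R^min_μ(x; m, ε)`. -/
noncomputable def RminW (μ : Measure ℝ) (m ε x : ℝ) : ℝ :=
  max (m + callFn μ (x - ε) - (meanM μ + ε)) (callFn μ (x + ε))

/-- `R^max_μ(x; m, ε)`. -/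
noncomputable def RmaxW (μ : Measure ℝ) (m ε x : ℝ) : ℝ :=
  conv2 (fun y => m + callFn μ (y + ε) - (meanM μ - ε)) (fun y => callFn μ (y - ε)) x

/-- Right derivative. -/
noncomputable def rderiv (f : ℝ → ℝ) (x : ℝ) : ℝ := derivWithin f (Set.Ioi x) x

/-- `R` is a call function: convex, nonincreasing, tending to `0` at `+∞`, and
`R(x)+x` has a finite limit at `−∞`. -/
def IsCallFn (R : ℝ → ℝ) : Prop :=
  ConvexOn ℝ Set.univ R ∧ Antitone R ∧
    Tendsto R atTop (nhds 0) ∧ ∃ c : ℝ, Tendsto (fun x => R x + x) atBot (nhds c)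

/-- Stop-loss distance, valued in `[0,∞]`. -/
noncomputable def dSL (μ ν : Measure ℝ) : ℝ≥0∞ :=
  ⨆ x : ℝ, ENNReal.ofReal |callFn μ x - callFn ν x|

/-- Lévy distance. -/
noncomputable def dLevy (μ ν : Measure ℝ) : ℝ≥0∞ :=
  sInf (ENNReal.ofReal '' {h : ℝ | 0 < h ∧ ∀ x : ℝ,
    cdfM μ (x - h) - h ≤ cdfM ν x ∧ cdfM ν x ≤ cdfM μ (x + h) + h})

/-- Prokhorov distance on ℝ. -/
noncomputable def dProk (μ ν : Measure ℝ) : ℝ≥0∞ :=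
  sInf (ENNReal.ofReal '' {h : ℝ | 0 < h ∧ ∀ A : Set ℝ, IsClosed A →
    ν A ≤ μ (Metric.cthickening h A) + ENNReal.ofReal h})

/-- Modified Lévy distance with parameter `p`. -/
noncomputable def dLevyMod (p : ℝ) (μ ν : Measure ℝ) : ℝ≥0∞ :=
  sInf (ENNReal.ofReal '' {h : ℝ | 0 < h ∧ ∀ x : ℝ,
    cdfM μ (x - h) - p ≤ cdfM ν x ∧ cdfM ν x ≤ cdfM μ (x + h) + p})

/-- Modified Prokhorov distance with parameter `p`. -/
noncomputable def dProkMod (p : ℝ) (μ ν : Measure ℝ) : ℝ≥0∞ :=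
  sInf (ENNReal.ofReal '' {h : ℝ | 0 < h ∧ ∀ A : Set ℝ, IsClosed A →
    ν A ≤ μ (Metric.cthickening h A) + ENNReal.ofReal p})

/-!
Write `R_μ` for the call function and `T x = max ((m - x)⁺) (R_μ x - ε)`. The least element is
explicit: `δ_m` if `R_μ m ≤ ε`; otherwise, for `b ≥ m` with `R_μ b = ε`, the law of
`max a (min Y b)` with `Y ∼ μ` and `R_μ a + a = m + ε`, or of `min Y b` when no such `a ≤ b`
exists. In each case
`R_S = T` piece by piece, because `R_μ` is antitone and `R_μ x + x` is monotone. Jensen's bound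
`(Eμ - x)⁺ ≤ R_μ x` puts `S` in the ball, and `T x + x → m` at `-∞` gives its mean. Any `ν` in
the ball with mean `m` has `R_ν ≥ (m - x)⁺` and `R_ν ≥ R_μ - ε`, so `R_S ≤ R_ν`.

Call-function domination with equal means gives the convex order: a convex `φ` minus its tangent
at the mean `m` equals `∫_{s > m} (y - s)⁺ dσ + ∫_{s ≤ m} (s - y)⁺ dσ`, where `σ` is the
Stieltjes measure of the right derivative of `φ`; integrating in `y` (Tonelli) turns these
kernels into calls and puts. Uniqueness holds because the right derivative of `R_μ` at `x` is
`-μ (x, ∞)`.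
-/

open Topology

section CallFunction

variable {μ ν : Measure ℝ}

noncomputable def putFn (μ : Measure ℝ) (x : ℝ) : ℝ := ∫ y, max (x - y) 0 ∂μ

lemma MemM.integrable_call (hμ : MemM μ) (x : ℝ) : Integrable (fun y => max (y - x) 0) μ :=
  have := hμ.1
  (hμ.2.sub (integrable_const x)).sup (integrable_const 0)

lemma MemM.integrable_put (hμ : MemM μ) (x : ℝ) : Integrable (fun y => max (x - y) 0) μ :=
  have := hμ.1
  ((integrable_const x).sub hμ.2).sup (integrable_const 0)

lemma callFn_nonneg (μ : Measure ℝ) (x : ℝ) : 0 ≤ callFn μ x :=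
  integral_nonneg fun _ => le_max_right _ _

lemma putFn_nonneg (μ : Measure ℝ) (x : ℝ) : 0 ≤ putFn μ x :=
  integral_nonneg fun _ => le_max_right _ _

lemma callFn_add_eq_integral_max (hμ : MemM μ) (x : ℝ) :
    callFn μ x + x = ∫ y, max y x ∂μ := by
  have := hμ.1
  have h : ∀ y : ℝ, max (y - x) 0 + x = max y x := fun y => by grind
  simp_rw [← h]
  rw [integral_add (hμ.integrable_call x) (integrable_const x)]
  simp [callFn]

lemma putFn_eq_callFn_add_sub_meanM (hμ : MemM μ) (x : ℝ) :
    putFn μ x = callFn μ x + x - meanM μ := by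
  have := hμ.1
  have parity : putFn μ x - callFn μ x = ∫ y, (x - y) ∂μ := by
    rw [putFn, callFn, ← integral_sub (hμ.integrable_put x) (hμ.integrable_call x)]
    exact integral_congr_ae (ae_of_all _ fun y => by grind)
  rw [integral_sub (integrable_const x) hμ.2] at parity
  simp only [integral_const, probReal_univ, one_smul] at parity
  rw [meanM]
  linarith

lemma max_meanM_sub_le_callFn (hμ : MemM μ) (x : ℝ) : max (meanM μ - x) 0 ≤ callFn μ x :=
  max_le (by linarith [putFn_eq_callFn_add_sub_meanM hμ x, putFn_nonneg μ x]) (callFn_nonneg μ x)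

lemma callFn_antitone (hμ : MemM μ) : Antitone (callFn μ) := fun x y hxy =>
  integral_mono (hμ.integrable_call y) (hμ.integrable_call x) fun z => by grind

lemma callFn_add_monotone (hμ : MemM μ) : Monotone (fun x => callFn μ x + x) := by
  intro x y hxy
  have := hμ.1
  simp only [callFn_add_eq_integral_max hμ]
  exact integral_mono (hμ.2.sup (integrable_const x)) (hμ.2.sup (integrable_const y))
    fun z => max_le_max le_rfl hxy

lemma callFn_lipschitzWith (hμ : MemM μ) : LipschitzWith 1 (callFn μ) := by
  refine LipschitzWith.of_dist_le_mul fun x y => ?_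
  have key : ∀ {x y}, x ≤ y → |callFn μ x - callFn μ y| ≤ |x - y| := fun {x y} h => by
    have := callFn_antitone hμ h
    have := callFn_add_monotone hμ h
    rw [abs_sub_comm x y, abs_of_nonneg (sub_nonneg.2 h), abs_le]
    constructor <;> linarith
  rw [NNReal.coe_one, one_mul, Real.dist_eq, Real.dist_eq]
  rcases le_total x y with h | h
  · exact key h
  · rw [abs_sub_comm, abs_sub_comm x]
    exact key h

lemma tendsto_callFn_atTop (hμ : MemM μ) : Tendsto (callFn μ) atTop (𝓝 0) := by
  have := hμ.1
  have h := tendsto_integral_filter_of_dominated_convergence (μ := μ) (l := atTop)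
    (F := fun x y => max (y - x) 0) (f := fun _ => 0) (fun y => |y|)
    (Eventually.of_forall fun x => (hμ.integrable_call x).aestronglyMeasurable)
    ((eventually_ge_atTop 0).mono fun x hx => ae_of_all _ fun y => by
      rw [Real.norm_eq_abs, abs_of_nonneg (le_max_right _ _)]
      exact max_le (by linarith [le_abs_self y]) (abs_nonneg y))
    hμ.2.abs
    (ae_of_all _ fun y => tendsto_const_nhds.congr'
      ((eventually_ge_atTop y).mono fun x hx => (max_eq_right (by linarith)).symm))
  rwa [integral_zero] at h

lemma tendsto_callFn_add_atBot (hμ : MemM μ) :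
    Tendsto (fun x => callFn μ x + x) atBot (𝓝 (meanM μ)) := by
  have := hμ.1
  simp only [callFn_add_eq_integral_max hμ]
  exact tendsto_integral_filter_of_dominated_convergence (F := fun x y => max y x) (fun y => |y|)
    (Eventually.of_forall fun x => (hμ.2.sup (integrable_const x)).aestronglyMeasurable)
    ((eventually_le_atBot 0).mono fun x hx => ae_of_all _ fun y => by
      rw [Real.norm_eq_abs, abs_le]
      constructor <;> grind [neg_abs_le, le_abs_self])
    hμ.2.abs
    (ae_of_all _ fun y => tendsto_const_nhds.congr'
      ((eventually_le_atBot y).mono fun x hx => (max_eq_left hx).symm))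

lemma hasDerivWithinAt_callFn (hμ : MemM μ) (x : ℝ) :
    HasDerivWithinAt (callFn μ) (-μ.real (Ioi x)) (Ioi x) x := by
  have := hμ.1
  rw [hasDerivWithinAt_iff_tendsto_slope' self_notMem_Ioi]
  have hslope : slope (callFn μ) x
      = fun t => ∫ y, (t - x)⁻¹ * (max (y - t) 0 - max (y - x) 0) ∂μ := funext fun t => by
    rw [slope_def_field, integral_const_mul, callFn, callFn,
      integral_sub (hμ.integrable_call t) (hμ.integrable_call x), div_eq_inv_mul]
  have hlim : -μ.real (Ioi x) = ∫ y, -(Ioi x).indicator 1 y ∂μ := by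
    rw [integral_neg, integral_indicator_one measurableSet_Ioi]
  rw [hslope, hlim]
  refine tendsto_integral_filter_of_dominated_convergence (fun _ => 1)
    (Eventually.of_forall fun t => (Continuous.aestronglyMeasurable (by fun_prop)))
    ?_ (integrable_const 1) (ae_of_all _ fun y => ?_)
  · filter_upwards [self_mem_nhdsWithin] with t (ht : x < t)
    refine ae_of_all _ fun y => ?_
    rw [norm_mul, norm_inv, Real.norm_eq_abs, Real.norm_eq_abs, abs_of_pos (sub_pos.2 ht)]
    refine inv_mul_le_of_le_mul₀ (sub_pos.2 ht).le zero_le_one ?_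
    calc |max (y - t) 0 - max (y - x) 0| ≤ |(y - t) - (y - x)| := abs_max_sub_max_le_abs _ _ _
      _ = (t - x) * 1 := by
        rw [mul_one, show y - t - (y - x) = -(t - x) by ring, abs_neg, abs_of_pos (sub_pos.2 ht)]
  · rcases le_or_gt y x with hyx | hxy
    · refine tendsto_const_nhds.congr' ?_
      filter_upwards [self_mem_nhdsWithin] with t (ht : x < t)
      rw [indicator_of_notMem (notMem_Ioi.2 hyx), max_eq_right (by linarith),
        max_eq_right (by linarith)]
      simp
    · refine tendsto_const_nhds.congr' ?_
      filter_upwards [self_mem_nhdsWithin, Ioo_mem_nhdsGT hxy] with t (ht : x < t) hty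
      rw [max_eq_left (by linarith [hty.2]), max_eq_left (by linarith),
        indicator_of_mem (mem_Ioi.2 hxy), Pi.one_apply, show y - t - (y - x) = -(t - x) by ring,
        mul_neg, inv_mul_cancel₀ (sub_pos.2 ht).ne']

lemma eq_of_callFn_eq (hμ : MemM μ) (hν : MemM ν) (h : callFn μ = callFn ν) : μ = ν := by
  have := hμ.1
  have := hν.1
  have hIoi : ∀ x, μ (Ioi x) = ν (Ioi x) := fun x => by
    have hμx := (hasDerivWithinAt_callFn hμ x).derivWithin (uniqueDiffWithinAt_Ioi x)
    have hνx := (hasDerivWithinAt_callFn hν x).derivWithin (uniqueDiffWithinAt_Ioi x)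
    rw [h, hνx, neg_inj] at hμx
    rwa [measureReal_eq_measureReal_iff, eq_comm] at hμx
  refine Measure.ext_of_Iic μ ν fun x => ?_
  rw [← compl_Ioi, prob_compl_eq_one_sub measurableSet_Ioi,
    prob_compl_eq_one_sub measurableSet_Ioi, hIoi]

end CallFunction

namespace ConvexOn

variable {φ : ℝ → ℝ}

lemma hasDerivWithinAt_rderiv (hφ : ConvexOn ℝ univ φ) (x : ℝ) :
    HasDerivWithinAt φ (rderiv φ x) (Ioi x) x :=
  hφ.hasDerivWithinAt_rightDeriv_of_mem_interior (by simp)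

lemma monotone_rderiv (hφ : ConvexOn ℝ univ φ) : Monotone (rderiv φ) := fun x y hxy =>
  hφ.monotoneOn_rightDeriv (by simp) (by simp) hxy

lemma rderiv_le_slope (hφ : ConvexOn ℝ univ φ) {x y : ℝ} (hxy : x < y) :
    rderiv φ x ≤ slope φ x y :=
  hφ.rightDeriv_le_slope_of_mem_interior (by simp) (mem_univ y) hxy

lemma slope_le_rderiv (hφ : ConvexOn ℝ univ φ) {x y : ℝ} (hxy : x < y) :
    slope φ x y ≤ rderiv φ y :=
  (hφ.slope_le_leftDeriv_of_mem_interior (mem_univ x) (by simp) hxy).trans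
    (hφ.leftDeriv_le_rightDeriv_of_mem_interior (by simp))

lemma rderiv_mul_sub_le (hφ : ConvexOn ℝ univ φ) (m y : ℝ) :
    rderiv φ m * (y - m) ≤ φ y - φ m := by
  rcases lt_trichotomy y m with h | rfl | h
  · have := hφ.slope_le_rderiv h
    rw [slope_def_field, div_le_iff₀ (sub_pos.2 h)] at this
    linarith
  · simp
  · have := hφ.rderiv_le_slope h
    rw [slope_def_field, le_div_iff₀ (sub_pos.2 h)] at this
    linarith

lemma continuousWithinAt_rderiv (hφ : ConvexOn ℝ univ φ) (x : ℝ) :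
    ContinuousWithinAt (rderiv φ) (Ici x) x := by
  have hmono := hφ.monotone_rderiv
  have hcont : Continuous φ := continuousOn_univ.1 (hφ.continuousOn isOpen_univ)
  rw [← continuousWithinAt_Ioi_iff_Ici, hmono.continuousWithinAt_Ioi_iff_rightLim_eq]
  refine le_antisymm ?_ (hmono.le_rightLim le_rfl)
  have hslope : ∀ y, x < y → Function.rightLim (rderiv φ) x ≤ slope φ x y := fun y hxy => by
    have : ContinuousAt (fun t => slope φ t y) x := by
      simp_rw [slope_def_field]
      exact (continuousAt_const.sub hcont.continuousAt).div
        (continuousAt_const.sub continuousAt_id) (sub_ne_zero.2 hxy.ne')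
    refine le_of_tendsto_of_tendsto (hmono.tendsto_rightLim x)
      (this.tendsto.mono_left nhdsWithin_le_nhds) ?_
    filter_upwards [Ioo_mem_nhdsGT hxy] with t ht using hφ.rderiv_le_slope ht.2
  exact ge_of_tendsto
    ((hasDerivWithinAt_iff_tendsto_slope' self_notMem_Ioi).1 (hφ.hasDerivWithinAt_rderiv x))
    (eventually_mem_nhdsWithin.mono hslope)

noncomputable def rderivStieltjes (hφ : ConvexOn ℝ univ φ) : StieltjesFunction ℝ where
  toFun := rderiv φ
  mono' := hφ.monotone_rderiv
  right_continuous' := hφ.continuousWithinAt_rderiv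

lemma sub_sub_rderiv_mul_eq_integral (hφ : ConvexOn ℝ univ φ) (m y : ℝ) :
    φ y - φ m - rderiv φ m * (y - m) = ∫ t in m..y, (rderiv φ t - rderiv φ m) := by
  have hcont : Continuous φ := continuousOn_univ.1 (hφ.continuousOn isOpen_univ)
  rw [intervalIntegral.integral_sub hφ.monotone_rderiv.intervalIntegrable intervalIntegrable_const,
    intervalIntegral.integral_const, smul_eq_mul,
    intervalIntegral.integral_eq_sub_of_hasDeriv_right hcont.continuousOn
      (fun t _ => hφ.hasDerivWithinAt_rderiv t) hφ.monotone_rderiv.intervalIntegrable]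
  ring

lemma ofReal_sub_sub_rderiv_mul_eq_lintegral (hφ : ConvexOn ℝ univ φ) (m y : ℝ) :
    ENNReal.ofReal (φ y - φ m - rderiv φ m * (y - m))
      = (∫⁻ t in Ioc m y, hφ.rderivStieltjes.measure (Ioc m t))
        + ∫⁻ t in Ioc y m, hφ.rderivStieltjes.measure (Ioc t m) := by
  have hmono := hφ.monotone_rderiv
  simp_rw [StieltjesFunction.measure_Ioc]
  rw [sub_sub_rderiv_mul_eq_integral hφ]
  rcases le_total m y with h | h
  · rw [Ioc_eq_empty h.not_gt, Measure.restrict_empty, lintegral_zero_measure, add_zero,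
      intervalIntegral.integral_of_le h, ofReal_integral_eq_lintegral_ofReal
        (hmono.intervalIntegrable.sub intervalIntegrable_const).1
        ((ae_restrict_iff' measurableSet_Ioc).2
          (ae_of_all _ fun t ht => sub_nonneg.2 (hmono ht.1.le)))]
    rfl
  · rw [Ioc_eq_empty h.not_gt, Measure.restrict_empty, lintegral_zero_measure, zero_add,
      intervalIntegral.integral_symm, ← intervalIntegral.integral_neg,
      intervalIntegral.integral_of_le h]
    simp_rw [neg_sub]
    rw [ofReal_integral_eq_lintegral_ofReal
        (intervalIntegrable_const.sub hmono.intervalIntegrable).1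
        ((ae_restrict_iff' measurableSet_Ioc).2
          (ae_of_all _ fun t ht => sub_nonneg.2 (hmono ht.2)))]
    rfl

end ConvexOn

section Triangle

variable (ν : Measure ℝ) [SFinite ν]

lemma setLIntegral_measure_Ioc_left (a b : ℝ) :
    ∫⁻ t in Ioc a b, ν (Ioc a t) = ∫⁻ s in Ioi a, ENNReal.ofReal (b - s) ∂ν := by
  let A : Set (ℝ × ℝ) := {p | p.1 ∈ Ioc a b ∧ p.2 ∈ Ioc a p.1}
  have hA : MeasurableSet A := by
    simp only [A, mem_Ioc]
    measurability
  have hslice : ∀ t, ν (Prod.mk t ⁻¹' A) = (Ioc a b).indicator (fun t => ν (Ioc a t)) t := by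
    intro t
    by_cases ht : t ∈ Ioc a b
    · rw [indicator_of_mem ht]
      congr 1
      ext s
      simp [A, ht.1, ht.2]
    · rw [indicator_of_notMem ht, ← measure_empty (μ := ν)]
      congr 1
      ext s
      simp only [A, mem_preimage, mem_ofPred_eq, ht, false_and, mem_empty_iff_false]
  have hslice' : ∀ s, volume ((fun t => (t, s)) ⁻¹' A)
      = (Ioi a).indicator (fun s => ENNReal.ofReal (b - s)) s := by
    intro s
    by_cases hs : a < s
    · have : (fun t => (t, s)) ⁻¹' A = Icc s b := by
        ext t; simp only [A, mem_preimage, mem_Ioc, mem_Icc]; grind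
      simp [this, hs]
    · have : (fun t => (t, s)) ⁻¹' A = ∅ := by
        ext t; simp only [A, mem_preimage, mem_Ioc]; grind
      simp [this, hs]
  rw [← lintegral_indicator measurableSet_Ioc, ← lintegral_indicator measurableSet_Ioi]
  simp_rw [← hslice, ← hslice']
  rw [← Measure.prod_apply hA, Measure.prod_apply_symm hA]

lemma setLIntegral_measure_Ioc_right (a b : ℝ) :
    ∫⁻ t in Ioc a b, ν (Ioc t b) = ∫⁻ s in Iic b, ENNReal.ofReal (s - a) ∂ν := by
  let A : Set (ℝ × ℝ) := {p | p.1 ∈ Ioc a b ∧ p.2 ∈ Ioc p.1 b}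
  have hA : MeasurableSet A := by
    simp only [A, mem_Ioc]
    measurability
  have hslice : ∀ t, ν (Prod.mk t ⁻¹' A) = (Ioc a b).indicator (fun t => ν (Ioc t b)) t := by
    intro t
    by_cases ht : t ∈ Ioc a b
    · rw [indicator_of_mem ht]
      congr 1
      ext s
      simp [A, ht.1, ht.2]
    · rw [indicator_of_notMem ht, ← measure_empty (μ := ν)]
      congr 1
      ext s
      simp only [A, mem_preimage, mem_ofPred_eq, ht, false_and, mem_empty_iff_false]
  have hslice' : ∀ s, volume ((fun t => (t, s)) ⁻¹' A)
      = (Iic b).indicator (fun s => ENNReal.ofReal (s - a)) s := by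
    intro s
    by_cases hs : s ≤ b
    · have : (fun t => (t, s)) ⁻¹' A = Ioo a s := by
        ext t; simp only [A, mem_preimage, mem_Ioc, mem_Ioo]; grind
      simp [this, hs]
    · have : (fun t => (t, s)) ⁻¹' A = ∅ := by
        ext t; simp only [A, mem_preimage, mem_Ioc]; grind
      simp [this, hs]
  rw [← lintegral_indicator measurableSet_Ioc, ← lintegral_indicator measurableSet_Iic]
  simp_rw [← hslice, ← hslice']
  rw [← Measure.prod_apply hA, Measure.prod_apply_symm hA]

end Triangle

section ConvexOrder

variable {μ ν π : Measure ℝ}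

lemma lintegral_ofReal_sub_eq_callFn (hπ : MemM π) (x : ℝ) :
    ∫⁻ y, ENNReal.ofReal (y - x) ∂π = ENNReal.ofReal (callFn π x) := by
  rw [callFn, ofReal_integral_eq_lintegral_ofReal (hπ.integrable_call x)
    (ae_of_all _ fun _ => le_max_right _ _)]
  simp

lemma lintegral_ofReal_sub_eq_putFn (hπ : MemM π) (x : ℝ) :
    ∫⁻ y, ENNReal.ofReal (x - y) ∂π = ENNReal.ofReal (putFn π x) := by
  rw [putFn, ofReal_integral_eq_lintegral_ofReal (hπ.integrable_put x)
    (ae_of_all _ fun _ => le_max_right _ _)]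
  simp

lemma ConvexOn.lintegral_ofReal_sub_sub_rderiv_mul {φ : ℝ → ℝ} (hφ : ConvexOn ℝ univ φ)
    (hπ : MemM π) (m : ℝ) :
    ∫⁻ y, ENNReal.ofReal (φ y - φ m - rderiv φ m * (y - m)) ∂π
      = (∫⁻ s in Ioi m, ENNReal.ofReal (callFn π s) ∂hφ.rderivStieltjes.measure)
        + ∫⁻ s in Iic m, ENNReal.ofReal (putFn π s) ∂hφ.rderivStieltjes.measure := by
  have := hπ.1
  simp_rw [hφ.ofReal_sub_sub_rderiv_mul_eq_lintegral, setLIntegral_measure_Ioc_left,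
    setLIntegral_measure_Ioc_right, ← lintegral_ofReal_sub_eq_callFn hπ,
    ← lintegral_ofReal_sub_eq_putFn hπ]
  rw [lintegral_add_left (Measurable.lintegral_prod_right (by fun_prop))]
  congr 1 <;> exact lintegral_lintegral_swap (by fun_prop)

section Tangent

variable {φ : ℝ → ℝ}

lemma integrable_sub_tangent (hπ : MemM π) (hφπ : Integrable φ π) (c d : ℝ) :
    Integrable (fun y => φ y - φ c - d * (y - c)) π :=
  have := hπ.1
  (hφπ.sub (integrable_const _)).sub ((hπ.2.sub (integrable_const _)).const_mul _)

lemma integral_sub_tangent_eq (hπ : MemM π) (hφπ : Integrable φ π) (c d : ℝ) :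
    ∫ y, (φ y - φ c - d * (y - c)) ∂π = ∫ y, φ y ∂π - φ c - d * (meanM π - c) := by
  have := hπ.1
  rw [integral_sub (f := fun y => φ y - φ c) (g := fun y => d * (y - c))
      (hφπ.sub (integrable_const _)) ((hπ.2.sub (integrable_const _)).const_mul _),
    integral_sub hφπ (integrable_const _), integral_const_mul,
    integral_sub hπ.2 (integrable_const _)]
  simp [meanM]

end Tangent

theorem convexOrder_of_callFn_le (hμ : MemM μ) (hν : MemM ν) (hmean : meanM μ = meanM ν)
    (hle : ∀ x, callFn μ x ≤ callFn ν x) : ConvexOrder μ ν := by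
  intro φ hφ hφμ hφν
  let ψ y := φ y - φ (meanM μ) - rderiv φ (meanM μ) * (y - meanM μ)
  have hψ_nonneg : ∀ y, 0 ≤ ψ y := fun y => sub_nonneg.2 (hφ.rderiv_mul_sub_le _ y)
  have hput : ∀ s, putFn μ s ≤ putFn ν s := fun s => by
    rw [putFn_eq_callFn_add_sub_meanM hμ, putFn_eq_callFn_add_sub_meanM hν, hmean]
    linarith [hle s]
  have hψ : ∫ y, ψ y ∂μ ≤ ∫ y, ψ y ∂ν := by
    rw [integral_eq_lintegral_of_nonneg_ae (ae_of_all _ hψ_nonneg)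
        (integrable_sub_tangent hμ hφμ _ _).aestronglyMeasurable,
      integral_eq_lintegral_of_nonneg_ae (ae_of_all _ hψ_nonneg)
        (integrable_sub_tangent hν hφν _ _).aestronglyMeasurable]
    refine ENNReal.toReal_mono (integrable_sub_tangent hν hφν _ _).lintegral_lt_top.ne ?_
    rw [hφ.lintegral_ofReal_sub_sub_rderiv_mul hμ, hφ.lintegral_ofReal_sub_sub_rderiv_mul hν]
    exact add_le_add (lintegral_mono fun s => ENNReal.ofReal_le_ofReal (hle s))
      (lintegral_mono fun s => ENNReal.ofReal_le_ofReal (hput s))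
  rw [integral_sub_tangent_eq hμ hφμ, integral_sub_tangent_eq hν hφν, ← hmean] at hψ
  linarith

end ConvexOrder

section Construction

variable {μ : Measure ℝ} {a b m ε : ℝ}

lemma memM_dirac (a : ℝ) : MemM (Measure.dirac a) :=
  ⟨inferInstance, integrable_dirac enorm_lt_top⟩

lemma MemM.map (hμ : MemM μ) {f : ℝ → ℝ} (hf : Measurable f) (hfμ : Integrable f μ) :
    MemM (μ.map f) :=
  have := hμ.1
  ⟨Measure.isProbabilityMeasure_map hf.aemeasurable,
    (integrable_map_measure aestronglyMeasurable_id hf.aemeasurable).2 hfμ⟩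

lemma MemM.map_min (hμ : MemM μ) (b : ℝ) : MemM (μ.map fun y => min y b) :=
  have := hμ.1
  hμ.map (by fun_prop) (hμ.2.inf (integrable_const b))

lemma MemM.map_max (hμ : MemM μ) (a : ℝ) : MemM (μ.map fun y => max a y) :=
  have := hμ.1
  hμ.map (f := fun y => max a y) (by fun_prop) ((integrable_const a).sup hμ.2)

lemma callFn_dirac (a x : ℝ) : callFn (Measure.dirac a) x = max (a - x) 0 :=
  integral_dirac _ a

lemma callFn_map {f : ℝ → ℝ} (hf : Measurable f) (x : ℝ) :
    callFn (μ.map f) x = ∫ y, max (f y - x) 0 ∂μ :=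
  integral_map hf.aemeasurable (Continuous.aestronglyMeasurable (by fun_prop))

lemma callFn_map_min (hμ : MemM μ) (b x : ℝ) :
    callFn (μ.map fun y => min y b) x = callFn μ x - callFn μ (max x b) := by
  rw [callFn_map (by fun_prop), callFn, callFn,
    ← integral_sub (hμ.integrable_call x) (hμ.integrable_call _)]
  exact integral_congr_ae (ae_of_all _ fun y => by grind)

lemma callFn_map_max (hμ : MemM μ) (a x : ℝ) :
    callFn (μ.map fun y => max a y) x = max (a - x) 0 + callFn μ (max x a) := by
  have := hμ.1
  have h : ∀ y, max (max a y - x) 0 = max (a - x) 0 + max (y - max x a) 0 := fun y => by grind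
  simp_rw [callFn_map (by fun_prop : Measurable fun y => max a y), h]
  rw [integral_add (integrable_const _) (hμ.integrable_call _)]
  simp [callFn]

lemma callFn_dirac_eq_max (hμ : MemM μ) (hm : callFn μ m ≤ ε) (x : ℝ) :
    callFn (Measure.dirac m) x = max (max (m - x) 0) (callFn μ x - ε) := by
  rw [callFn_dirac, eq_comm, max_eq_left_iff]
  rcases le_total x m with hxm | hmx
  · have : callFn μ x + x ≤ callFn μ m + m := callFn_add_monotone hμ hxm
    exact le_max_of_le_left (by linarith)
  · exact le_max_of_le_right (by linarith [callFn_antitone hμ hmx])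

lemma callFn_map_min_eq_max (hμ : MemM μ) (hb : callFn μ b = ε)
    (hlow : ∀ x ≤ b, m + ε < callFn μ x + x) (x : ℝ) :
    callFn (μ.map fun y => min y b) x = max (max (m - x) 0) (callFn μ x - ε) := by
  have hmb := hlow b le_rfl
  rw [callFn_map_min hμ]
  rcases le_total x b with hxb | hbx
  · have := hlow x hxb
    have := callFn_antitone hμ hxb
    rw [max_eq_right hxb, hb]
    grind
  · have := callFn_antitone hμ hbx
    rw [max_eq_left hbx, sub_self]
    grind

lemma callFn_map_min_map_max_eq_max (hμ : MemM μ) (hab : a ≤ b) (hb : callFn μ b = ε)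
    (ha : callFn μ a + a = m + ε) (x : ℝ) :
    callFn ((μ.map fun y => min y b).map fun y => max a y) x
      = max (max (m - x) 0) (callFn μ x - ε) := by
  have ham : a ≤ m := by linarith [callFn_antitone hμ hab]
  have hmb : m ≤ b := by linarith [callFn_add_monotone hμ hab]
  rw [callFn_map_max (hμ.map_min b), callFn_map_min hμ]
  rcases le_total x a with hxa | hax
  · have : callFn μ x + x ≤ callFn μ a + a := callFn_add_monotone hμ hxa
    rw [max_eq_right hxa, max_eq_right hab, hb]
    grind
  rcases le_total x b with hxb | hbx
  · have := callFn_antitone hμ hxb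
    have : callFn μ a + a ≤ callFn μ x + x := callFn_add_monotone hμ hax
    rw [max_eq_left hax, max_eq_right hxb, hb]
    grind
  · have := callFn_antitone hμ hbx
    rw [max_eq_left hax, max_eq_left hbx, sub_self]
    grind

lemma exists_callFn_eq_max (hε : 0 < ε) (hμ : MemM μ) (m : ℝ) :
    ∃ S, MemM S ∧ ∀ x, callFn S x = max (max (m - x) 0) (callFn μ x - ε) := by
  have hC := (callFn_lipschitzWith hμ).continuous
  rcases le_or_gt (callFn μ m) ε with hm | hm
  · exact ⟨_, memM_dirac m, callFn_dirac_eq_max hμ hm⟩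
  obtain ⟨M, hmM, hM⟩ :=
    ((eventually_ge_atTop m).and ((tendsto_callFn_atTop hμ).eventually_lt_const hε)).exists
  obtain ⟨b, ⟨hmb, -⟩, hb⟩ :=
    intermediate_value_Icc' hmM hC.continuousOn ⟨hM.le, hm.le⟩
  by_cases hlow : ∀ x ≤ b, m + ε < callFn μ x + x
  · exact ⟨_, hμ.map_min b, callFn_map_min_eq_max hμ hb hlow⟩
  push Not at hlow
  obtain ⟨x₀, hx₀b, hx₀⟩ := hlow
  obtain ⟨a, ⟨-, hab⟩, ha⟩ := intermediate_value_Icc (f := fun x => callFn μ x + x) hx₀b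
    (hC.add continuous_id).continuousOn
    ⟨hx₀, show m + ε ≤ callFn μ b + b by linarith⟩
  exact ⟨_, (hμ.map_min b).map_max a, callFn_map_min_map_max_eq_max hμ hab hb ha⟩

end Construction

section Ball

variable {μ ν S : Measure ℝ} {m ε : ℝ}

lemma dSL_le_ofReal_iff (hε : 0 ≤ ε) :
    dSL μ ν ≤ ENNReal.ofReal ε ↔ ∀ x, |callFn μ x - callFn ν x| ≤ ε := by
  simp only [dSL, iSup_le_iff, ENNReal.ofReal_le_ofReal_iff hε]

lemma meanM_eq_of_callFn_eq_max (hμ : MemM μ) (hS : MemM S) (hm : meanM μ - ε ≤ m)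
    (hS_call : ∀ x, callFn S x = max (max (m - x) 0) (callFn μ x - ε)) : meanM S = m := by
  have hlim : Tendsto (fun x => max m (callFn μ x + x - ε)) atBot (𝓝 (max m (meanM μ - ε))) :=
    tendsto_const_nhds.max ((tendsto_callFn_add_atBot hμ).sub_const ε)
  rw [max_eq_left hm] at hlim
  refine tendsto_nhds_unique (tendsto_callFn_add_atBot hS) (hlim.congr' ?_)
  filter_upwards [eventually_le_atBot m] with x hx
  rw [hS_call, max_eq_left (sub_nonneg.2 hx), ← max_add_add_right]
  ring_nf

lemma dSL_le_of_callFn_eq_max (hε : 0 ≤ ε) (hμ : MemM μ) (hm : m ≤ meanM μ + ε)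
    (hS_call : ∀ x, callFn S x = max (max (m - x) 0) (callFn μ x - ε)) :
    dSL μ S ≤ ENNReal.ofReal ε := by
  refine (dSL_le_ofReal_iff hε).2 fun x => ?_
  have := max_meanM_sub_le_callFn hμ x
  have := callFn_nonneg μ x
  rw [hS_call, abs_le]
  constructor
  · grind
  · linarith [le_max_right (max (m - x) 0) (callFn μ x - ε)]

lemma max_le_callFn_of_dSL_le (hε : 0 ≤ ε) (hν : MemM ν) (hd : dSL μ ν ≤ ENNReal.ofReal ε)
    (hνm : meanM ν = m) (x : ℝ) : max (max (m - x) 0) (callFn μ x - ε) ≤ callFn ν x := by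
  have := (abs_le.1 ((dSL_le_ofReal_iff hε).1 hd x)).2
  refine max_le ?_ (by linarith)
  rw [← hνm]
  exact max_meanM_sub_le_callFn hν x

end Ball

/-- existence and uniqueness of the least element `S(μ; m, ε)` of
`B^SL(μ,ε) ∩ M_m` in convex order, with call function
`max{(m−x)⁺, R_μ(x) − ε}`. -/
theorem ball_sl_least_element (ε : ℝ) (hε : 0 < ε) (μ : Measure ℝ) (hμ : MemM μ)
    (m : ℝ) (hm : m ∈ Set.Icc (meanM μ - ε) (meanM μ + ε)) :
    ∃! S : Measure ℝ,
      (MemM S ∧ dSL μ S ≤ ENNReal.ofReal ε ∧ meanM S = m) ∧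
      (∀ ν : Measure ℝ, MemM ν → dSL μ ν ≤ ENNReal.ofReal ε → meanM ν = m →
        ConvexOrder S ν) ∧
      (∀ x : ℝ, callFn S x = max (max (m - x) 0) (callFn μ x - ε)) := by
  obtain ⟨S, hS, hS_call⟩ := exists_callFn_eq_max hε hμ m
  have hS_mean := meanM_eq_of_callFn_eq_max hμ hS hm.1 hS_call
  refine ⟨S, ⟨⟨hS, dSL_le_of_callFn_eq_max hε.le hμ hm.2 hS_call, hS_mean⟩,
    fun ν hν hd hνm => ?_, hS_call⟩, ?_⟩
  · exact convexOrder_of_callFn_le hS hν (hS_mean.trans hνm.symm) fun x =>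
      (hS_call x).trans_le (max_le_callFn_of_dSL_le hε.le hν hd hνm x)
  · rintro S' ⟨⟨hS', -, -⟩, -, hS'_call⟩
    exact eq_of_callFn_eq hS' hS (funext fun x => (hS'_call x).trans (hS_call x).symm)
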